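/- arXiv:0802.3763 — 2 statements merged into one kernel-verified Lean document; each statement's English description precedes it below -/
import Mathlib

section
/- Let K = ℚ(t) be the field of rational functions in one variable t over ℚ, and let W be the Weierstrass curve y² + (1−t)xy − (t+t²)y = x³ − (t+t²)x² over K. Then the discriminant of W is nonzero (so W is an elliptic curve), and the point (0,0) has additive order exactly 6 in the group W(K) of K-rational points. -/
open WeierstrassCurve

/-!
With `P = (0, 0)` on the Tate normal form `W(b, c)`, the chord–tangent formulas give
`2P = (b, bc)` and `3P = (c, b - c)`, and `3P` is its own negative exactly when `b = c + c²`.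
For `c = t`, `b = t + t²` this holds, so `6P = 0` while `2P` and `3P` are affine points, hence
nonzero: `P` has order `6`. The discriminant of this curve factors as `t⁶ (1 + t)³ (1 + 9t)`.
-/

/-- The Weierstrass curve `y² + (1−t)xy − (t+t²)y = x³ − (t+t²)x²` over `K = ℚ(t)`
(the Tate normal form with `c = t`, `b = t + t²`, i.e. the surface `𝔈(Γ₁(6))`). -/
noncomputable def Wgamma16 : WeierstrassCurve.Affine (RatFunc ℚ) :=
  { a₁ := 1 - RatFunc.X, a₂ := -(RatFunc.X + RatFunc.X ^ 2),
    a₃ := -(RatFunc.X + RatFunc.X ^ 2), a₄ := 0, a₆ := 0 }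

namespace WeierstrassCurve.Affine

variable {F : Type*} [Field F] {b c : F}

def tateNormal (b c : F) : Affine F :=
  { a₁ := 1 - c, a₂ := -b, a₃ := -b, a₄ := 0, a₆ := 0 }

lemma tateNormal_nonsingular_zero_zero_iff : (tateNormal b c).Nonsingular 0 0 ↔ b ≠ 0 := by
  simp [tateNormal]

lemma tateNormal_nonsingular_b_mul_c (hb : b ≠ 0) : (tateNormal b c).Nonsingular b (b * c) := by
  refine (nonsingular_iff' _ _).mpr ⟨(equation_iff' _ _).mpr ?_, ?_⟩
  · simp only [tateNormal]; ring
  by_cases hc : c = 0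
  · left; simp only [tateNormal, hc]
    convert neg_ne_zero.mpr (pow_ne_zero 2 hb) using 1; ring
  · right; simp only [tateNormal]; ring_nf; exact mul_ne_zero hb hc

lemma tateNormal_nonsingular_c_of_eq (hb : b ≠ 0) (hbc : b = c + c ^ 2) :
    (tateNormal b c).Nonsingular c (b - c) := by
  subst hbc
  have hc : c ≠ 0 := by rintro rfl; simp at hb
  refine (nonsingular_iff' _ _).mpr ⟨(equation_iff' _ _).mpr ?_, Or.inl ?_⟩
  · simp only [tateNormal]; ring
  · simp only [tateNormal]
    convert pow_ne_zero 3 hc using 1; ring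

lemma tateNormal_Δ_of_eq (hbc : b = c + c ^ 2) :
    (tateNormal b c).Δ = c ^ 6 * (1 + c) ^ 3 * (1 + 9 * c) := by
  subst hbc
  simp only [tateNormal, Δ, b₂, b₄, b₆, b₈]
  ring

variable [DecidableEq F]

lemma tateNormal_add_self_zero_zero (h₀ : (tateNormal b c).Nonsingular 0 0)
    (h₂ : (tateNormal b c).Nonsingular b (b * c)) :
    Point.some 0 0 h₀ + Point.some 0 0 h₀ = Point.some b (b * c) h₂ := by
  have hb := tateNormal_nonsingular_zero_zero_iff.mp h₀
  have hy : (0 : F) ≠ (tateNormal b c).negY 0 0 := by simpa [negY, tateNormal] using hb.symm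
  have hslope : (tateNormal b c).slope 0 0 0 0 = 0 := by
    rw [slope_of_Y_ne rfl hy]; simp [tateNormal]
  rw [Point.add_self_of_Y_ne hy, Point.some.injEq, addX, addY, negAddY, negY, addX, hslope]
  constructor <;> simp only [tateNormal] <;> ring

lemma tateNormal_add_b_mul_c_zero_zero (h₀ : (tateNormal b c).Nonsingular 0 0)
    (h₂ : (tateNormal b c).Nonsingular b (b * c)) (h₃ : (tateNormal b c).Nonsingular c (b - c)) :
    Point.some b (b * c) h₂ + Point.some 0 0 h₀ = Point.some c (b - c) h₃ := by
  have hb := tateNormal_nonsingular_zero_zero_iff.mp h₀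
  have hslope : (tateNormal b c).slope b 0 (b * c) 0 = c := by
    rw [slope_of_X_ne hb, div_eq_iff (sub_ne_zero.mpr hb)]; ring
  rw [Point.add_of_X_ne hb, Point.some.injEq, addX, addY, negAddY, negY, addX, hslope]
  constructor <;> simp only [tateNormal] <;> ring

lemma tateNormal_three_nsmul (h₀ : (tateNormal b c).Nonsingular 0 0)
    (h₃ : (tateNormal b c).Nonsingular c (b - c)) :
    3 • Point.some 0 0 h₀ = Point.some c (b - c) h₃ := by
  have h₂ := tateNormal_nonsingular_b_mul_c (c := c) (tateNormal_nonsingular_zero_zero_iff.mp h₀)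
  rw [succ_nsmul, two_nsmul, tateNormal_add_self_zero_zero h₀ h₂,
    tateNormal_add_b_mul_c_zero_zero h₀ h₂ h₃]

lemma tateNormal_add_self_c_eq_zero (h₃ : (tateNormal b c).Nonsingular c (b - c))
    (hbc : b = c + c ^ 2) : Point.some c (b - c) h₃ + Point.some c (b - c) h₃ = 0 :=
  Point.add_self_of_Y_eq (by simp only [negY, tateNormal]; rw [hbc]; ring)

lemma tateNormal_addOrderOf_some_zero_zero (h₀ : (tateNormal b c).Nonsingular 0 0)
    (hbc : b = c + c ^ 2) : addOrderOf (Point.some 0 0 h₀) = 6 := by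
  have hb := tateNormal_nonsingular_zero_zero_iff.mp h₀
  have h₂ := tateNormal_nonsingular_b_mul_c (c := c) hb
  have h₃ := tateNormal_nonsingular_c_of_eq hb hbc
  have h3P := tateNormal_three_nsmul h₀ h₃
  have h6P : 6 • Point.some 0 0 h₀ = 0 := by
    rw [show 6 = 3 * 2 from rfl, mul_nsmul, h3P, two_nsmul, tateNormal_add_self_c_eq_zero h₃ hbc]
  refine addOrderOf_eq_of_nsmul_and_div_prime_nsmul (by norm_num) h6P fun p hp hp6 => ?_
  rcases (Nat.Prime.dvd_mul hp).mp (show p ∣ 2 * 3 from hp6) with h | h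
  · obtain rfl := (Nat.prime_dvd_prime_iff_eq hp Nat.prime_two).mp h
    rw [show 6 / 2 = 3 from rfl, h3P]
    exact Point.some_ne_zero h₃
  · obtain rfl := (Nat.prime_dvd_prime_iff_eq hp Nat.prime_three).mp h
    rw [show 6 / 3 = 2 from rfl, two_nsmul, tateNormal_add_self_zero_zero h₀ h₂]
    exact Point.some_ne_zero h₂

end WeierstrassCurve.Affine

open WeierstrassCurve.Affine Polynomial

lemma Wgamma16_eq_tateNormal :
    Wgamma16 = tateNormal (RatFunc.X + RatFunc.X ^ 2) RatFunc.X :=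
  rfl

lemma Wgamma16_Δ_ne_zero : Wgamma16.Δ ≠ 0 := by
  rw [Wgamma16_eq_tateNormal, tateNormal_Δ_of_eq rfl]
  have hpoly : (RatFunc.X ^ 6 * (1 + RatFunc.X) ^ 3 * (1 + 9 * RatFunc.X) : RatFunc ℚ) =
      algebraMap ℚ[X] (RatFunc ℚ) (X ^ 6 * (1 + X) ^ 3 * (1 + 9 * X)) := by
    simp only [map_mul, map_pow, map_add, map_one, map_ofNat, RatFunc.algebraMap_X]
  rw [hpoly, map_ne_zero_iff _ (RatFunc.algebraMap_injective ℚ)]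
  intro h
  have h₁ := congrArg (eval 1) h
  norm_num at h₁

open Classical in
/-- The discriminant of `y² + (1−t)xy − (t+t²)y = x³ − (t+t²)x²` over `ℚ(t)` is nonzero, and
the point `(0,0)` has additive order exactly `6` in the group of `ℚ(t)`-rational points. -/
theorem Wgamma16_point_order_six :
    Wgamma16.Δ ≠ 0 ∧
      ∃ h : Wgamma16.Nonsingular 0 0,
        addOrderOf (WeierstrassCurve.Affine.Point.some 0 0 h) = 6 := by
  have h₀ : Wgamma16.Nonsingular 0 0 :=
    (equation_iff_nonsingular_of_Δ_ne_zero Wgamma16_Δ_ne_zero).mp (equation_zero.mpr rfl)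
  exact ⟨Wgamma16_Δ_ne_zero, h₀, tateNormal_addOrderOf_some_zero_zero h₀ rfl⟩
end

section
/- Let K = ℚ(t) be the field of rational functions in one variable t over ℚ, and let W be the Weierstrass curve y² + (1−t)xy − (t+t²)y = x³ − (t+t²)x² over K. Then there exists a point of additive order exactly 2 in W(K) and a point of additive order exactly 3 in W(K); indeed 3·(0,0) has order 2 and 2·(0,0) has order 3. -/
open WeierstrassCurve

/-!
On a Tate normal form `W(b, c)` with `b ≠ 0` the point `P = (0, 0)` satisfies `2P = (b, bc)` and
`3P = (c, b - c)`. The negative of `(c, b - c)` is `(c, c²)`, so `3P` is `2`-torsion as soon as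
`b = c + c²`. Then `6P = 0`, and since `2P` and `3P` are affine points, hence nonzero, their
orders are the primes `3` and `2`.
-/

lemma RatFunc.X_add_X_sq_ne_zero {K : Type*} [Field K] : (X + X ^ 2 : RatFunc K) ≠ 0 := by
  have hX1 : (X + 1 : RatFunc K) ≠ 0 := by
    simpa using RatFunc.algebraMap_ne_zero (Polynomial.X_add_C_ne_zero (1 : K))
  rw [show (X + X ^ 2 : RatFunc K) = X * (X + 1) by ring]
  exact mul_ne_zero X_ne_zero hX1

namespace WeierstrassCurve.Affine

variable {F : Type*} [Field F]

lemma Point.exists_some_eq_some {W : Affine F} {x y x' y' : F} (h : W.Nonsingular x y)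
    (hx : x = x') (hy : y = y') :
    ∃ h' : W.Nonsingular x' y', Point.some x y h = .some x' y' h' := by
  subst hx hy
  exact ⟨h, rfl⟩

@[simps]
def tateNormalForm (b c : F) : Affine F :=
  { a₁ := 1 - c, a₂ := -b, a₃ := -b, a₄ := 0, a₆ := 0 }

namespace TateNormalForm

variable {b c : F}

lemma nonsingular_zero_zero (hb : b ≠ 0) : (tateNormalForm b c).Nonsingular 0 0 := by
  rw [nonsingular_iff, equation_iff]
  refine ⟨by simp, Or.inr ?_⟩
  simpa [negY] using hb.symm

variable [DecidableEq F]

lemma exists_two_smul_eq (hb : b ≠ 0) :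
    ∃ h, 2 • Point.some 0 0 (nonsingular_zero_zero (c := c) hb) = .some b (b * c) h := by
  have hy : (0 : F) ≠ (tateNormalForm b c).negY 0 0 := by simpa [negY] using hb.symm
  have hslope : (tateNormalForm b c).slope 0 0 0 0 = 0 := by
    rw [slope_of_Y_ne rfl hy]
    simp
  rw [two_smul, Point.add_self_of_Y_ne hy]
  refine Point.exists_some_eq_some _ ?_ ?_ <;>
    simp only [addY, negAddY, addX, negY, hslope, tateNormalForm_a₁, tateNormalForm_a₂,
      tateNormalForm_a₃] <;> ring

lemma exists_three_smul_eq (hb : b ≠ 0) :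
    ∃ h, 3 • Point.some 0 0 (nonsingular_zero_zero (c := c) hb) = .some c (b - c) h := by
  obtain ⟨h₂, h2P⟩ := exists_two_smul_eq (c := c) hb
  have hslope : (tateNormalForm b c).slope b 0 (b * c) 0 = c := by
    rw [slope_of_X_ne hb, sub_zero, sub_zero, mul_div_cancel_left₀ c hb]
  rw [succ_nsmul, h2P, Point.add_of_X_ne hb]
  refine Point.exists_some_eq_some _ ?_ ?_ <;>
    simp only [addY, negAddY, addX, negY, hslope, tateNormalForm_a₁, tateNormalForm_a₂,
      tateNormalForm_a₃] <;> ring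

lemma two_smul_three_smul_eq_zero (hb : b ≠ 0) (hbc : b = c + c ^ 2) :
    2 • 3 • Point.some 0 0 (nonsingular_zero_zero (c := c) hb) = 0 := by
  obtain ⟨h₃, h3P⟩ := exists_three_smul_eq (c := c) hb
  rw [h3P, two_smul]
  refine Point.add_self_of_Y_eq ?_
  simp only [negY, tateNormalForm_a₁, tateNormalForm_a₃]
  linear_combination hbc

lemma addOrderOf_three_smul (hb : b ≠ 0) (hbc : b = c + c ^ 2) :
    addOrderOf (3 • Point.some 0 0 (nonsingular_zero_zero (c := c) hb)) = 2 := by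
  refine addOrderOf_eq_prime (two_smul_three_smul_eq_zero hb hbc) ?_
  obtain ⟨h₃, h3P⟩ := exists_three_smul_eq (c := c) hb
  exact h3P ▸ Point.some_ne_zero h₃

lemma addOrderOf_two_smul (hb : b ≠ 0) (hbc : b = c + c ^ 2) :
    addOrderOf (2 • Point.some 0 0 (nonsingular_zero_zero (c := c) hb)) = 3 := by
  refine addOrderOf_eq_prime ?_ ?_
  · rw [smul_comm]
    exact two_smul_three_smul_eq_zero hb hbc
  · obtain ⟨h₂, h2P⟩ := exists_two_smul_eq (c := c) hb
    exact h2P ▸ Point.some_ne_zero h₂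

end TateNormalForm

end WeierstrassCurve.Affine

open Classical in
/-- The group of `ℚ(t)`-rational points of `y² + (1−t)xy − (t+t²)y = x³ − (t+t²)x²` contains a
point of additive order exactly `2` and a point of additive order exactly `3`; indeed
`3 • (0,0)` has order `2` and `2 • (0,0)` has order `3`. -/
theorem Wgamma16_two_and_three_torsion :
    (∃ P : Wgamma16.Point, addOrderOf P = 2) ∧
      (∃ P : Wgamma16.Point, addOrderOf P = 3) ∧
      ∃ h : Wgamma16.Nonsingular 0 0,
        addOrderOf (3 • WeierstrassCurve.Affine.Point.some 0 0 h) = 2 ∧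
        addOrderOf (2 • WeierstrassCurve.Affine.Point.some 0 0 h) = 3 := by
  open Affine.TateNormalForm in
  have hb : (RatFunc.X + RatFunc.X ^ 2 : RatFunc ℚ) ≠ 0 := RatFunc.X_add_X_sq_ne_zero
  have h2 := addOrderOf_three_smul (c := (RatFunc.X : RatFunc ℚ)) hb rfl
  have h3 := addOrderOf_two_smul (c := (RatFunc.X : RatFunc ℚ)) hb rfl
  exact ⟨⟨_, h2⟩, ⟨_, h3⟩, nonsingular_zero_zero hb, h2, h3⟩
end
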